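/- If R ∈ A⊗A⊗A satisfies R¹⊗aR²⊗R³ = R¹⊗R²⊗R³a for all a ∈ A, together with R¹R²⊗R³ = 1⊗1 and R²⊗R³R¹ = 1⊗1, then R also satisfies the centralizing conditions R¹⊗R²⊗aR³ = R¹a⊗R²⊗R³ and aR¹⊗R²⊗R³ = R¹⊗R²a⊗R³ for all a ∈ A. -/

import Mathlib

/-!
Write `R = ∑ xᵢ ⊗ yᵢ ⊗ zᵢ`. Contracting `R¹ ⊗ bR² ⊗ R³ = R¹ ⊗ R² ⊗ R³b` to `R² ⊗ R³R¹` and using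
`R² ⊗ R³R¹ = 1 ⊗ 1` gives `∑ yᵢ ⊗ zᵢ b xᵢ = b ⊗ 1` for every `b`. Applied once in each index of a
double sum, this identity shows that `R` is fixed by the cyclic permutation `σ` of the tensor
factors. As `σ` is an algebra automorphism of `A ⊗ A ⊗ A`, it transports
`(1 ⊗ a ⊗ 1) R = R (1 ⊗ 1 ⊗ a)` to `(a ⊗ 1 ⊗ 1) R = R (1 ⊗ a ⊗ 1)` and then to
`(1 ⊗ 1 ⊗ a) R = R (a ⊗ 1 ⊗ 1)`, which are the two claims.
-/

open TensorProduct

section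

variable {k A : Type*} [CommRing k] [Ring A] [Algebra k A]

variable (k A) in
noncomputable def tensorCycle : (A ⊗[k] A) ⊗[k] A ≃ₐ[k] (A ⊗[k] A) ⊗[k] A :=
  (Algebra.TensorProduct.assoc k k k A A A).trans (Algebra.TensorProduct.comm k A (A ⊗[k] A))

@[simp]
theorem tensorCycle_tmul (u v w : A) :
    tensorCycle k A (u ⊗ₜ v ⊗ₜ w) = v ⊗ₜ w ⊗ₜ u :=
  rfl

theorem map_mul_eq_mul_map_of_map_eq {B F : Type*} [Mul B] [FunLike F B B] [MulHomClass F B B]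
    (σ : F) {r p q : B} (hr : σ r = r) (h : p * r = r * q) : σ p * r = r * σ q := by
  simpa only [map_mul, hr] using congrArg σ h

variable {ι : Type*} {s : Finset ι} {x y z : ι → A}

theorem sum_tmul_mul_mul_eq_tmul_one
    (hcen : ∀ a : A,
      ∑ i ∈ s, x i ⊗ₜ[k] (a * y i) ⊗ₜ[k] z i
        = ∑ i ∈ s, x i ⊗ₜ[k] y i ⊗ₜ[k] (z i * a))
    (hnorm2 : ∑ i ∈ s, y i ⊗ₜ[k] (z i * x i) = (1 : A) ⊗ₜ[k] (1 : A)) (b : A) :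
    ∑ i ∈ s, y i ⊗ₜ[k] (z i * b * x i) = b ⊗ₜ[k] (1 : A) := by
  let contract : (A ⊗[k] A) ⊗[k] A →ₗ[k] A ⊗[k] A :=
    (LinearMap.lTensor A (LinearMap.mul' k A)) ∘ₗ
      (TensorProduct.assoc k A A A).toLinearMap ∘ₗ (tensorCycle k A).toLinearMap
  calc ∑ i ∈ s, y i ⊗ₜ[k] (z i * b * x i)
      = contract (∑ i ∈ s, x i ⊗ₜ[k] y i ⊗ₜ[k] (z i * b)) := by simp [contract]
    _ = (b ⊗ₜ[k] 1) * ∑ i ∈ s, y i ⊗ₜ[k] (z i * x i) := by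
      rw [← hcen]; simp [contract, Finset.mul_sum]
    _ = b ⊗ₜ[k] 1 := by rw [hnorm2, ← Algebra.TensorProduct.one_def, mul_one]

theorem sum_tmul_tmul_cycle_eq
    (hcen : ∀ a : A,
      ∑ i ∈ s, x i ⊗ₜ[k] (a * y i) ⊗ₜ[k] z i
        = ∑ i ∈ s, x i ⊗ₜ[k] y i ⊗ₜ[k] (z i * a))
    (hnorm2 : ∑ i ∈ s, y i ⊗ₜ[k] (z i * x i) = (1 : A) ⊗ₜ[k] (1 : A)) :
    ∑ i ∈ s, y i ⊗ₜ[k] z i ⊗ₜ[k] x i = ∑ i ∈ s, x i ⊗ₜ[k] y i ⊗ₜ[k] z i := by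
  have hcollapse := sum_tmul_mul_mul_eq_tmul_one hcen hnorm2
  let f (j : ι) (t : A ⊗[k] A) : (A ⊗[k] A) ⊗[k] A :=
    (TensorProduct.assoc k A A A).symm (y j ⊗ₜ (t * (1 ⊗ₜ x j)))
  let g (i : ι) : A ⊗[k] A →ₗ[k] (A ⊗[k] A) ⊗[k] A :=
    TensorProduct.map ((TensorProduct.mk k A A).flip (y i)) (LinearMap.mulLeft k (z i))
  calc ∑ j ∈ s, y j ⊗ₜ[k] z j ⊗ₜ[k] x j
      = ∑ j ∈ s, f j (z j ⊗ₜ 1) := by simp [f]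
    _ = ∑ j ∈ s, f j (∑ i ∈ s, y i ⊗ₜ (z i * z j * x i)) := by simp only [hcollapse]
    _ = ∑ j ∈ s, ∑ i ∈ s, y j ⊗ₜ[k] y i ⊗ₜ[k] (z i * z j * x i * x j) := by
      simp [f, Finset.sum_mul, tmul_sum]
    _ = ∑ i ∈ s, ∑ j ∈ s, y j ⊗ₜ[k] y i ⊗ₜ[k] (z i * z j * x i * x j) := Finset.sum_comm
    _ = ∑ i ∈ s, g i (∑ j ∈ s, y j ⊗ₜ (z j * x i * x j)) := by simp [g, mul_assoc]
    _ = ∑ i ∈ s, g i (x i ⊗ₜ 1) := by simp only [hcollapse]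
    _ = ∑ i ∈ s, x i ⊗ₜ[k] y i ⊗ₜ[k] z i := by simp [g]

end

theorem other_centralizing_conditions_of_R_matrix
    (k A : Type*) [CommRing k] [Ring A] [Algebra k A]
    (ι : Type*) (s : Finset ι) (x y z : ι → A)
    (hcen : ∀ a : A,
      ∑ i ∈ s, x i ⊗ₜ[k] (a * y i) ⊗ₜ[k] z i
        = ∑ i ∈ s, x i ⊗ₜ[k] y i ⊗ₜ[k] (z i * a))
    (hnorm2 : ∑ i ∈ s, y i ⊗ₜ[k] (z i * x i) = (1 : A) ⊗ₜ[k] (1 : A)) :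
    (∀ a : A,
      ∑ i ∈ s, x i ⊗ₜ[k] y i ⊗ₜ[k] (a * z i)
        = ∑ i ∈ s, (x i * a) ⊗ₜ[k] y i ⊗ₜ[k] z i) ∧
    (∀ a : A,
      ∑ i ∈ s, (a * x i) ⊗ₜ[k] y i ⊗ₜ[k] z i
        = ∑ i ∈ s, x i ⊗ₜ[k] (y i * a) ⊗ₜ[k] z i) := by
  set R := ∑ i ∈ s, x i ⊗ₜ[k] y i ⊗ₜ[k] z i
  have hleft (u v w : A) :
      (u ⊗ₜ[k] v ⊗ₜ[k] w) * R = ∑ i ∈ s, (u * x i) ⊗ₜ (v * y i) ⊗ₜ (w * z i) := by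
    simp [R, Finset.mul_sum]
  have hright (u v w : A) :
      R * (u ⊗ₜ[k] v ⊗ₜ[k] w) = ∑ i ∈ s, (x i * u) ⊗ₜ (y i * v) ⊗ₜ (z i * w) := by
    simp [R, Finset.sum_mul]
  have hC (a : A) : (1 ⊗ₜ a ⊗ₜ 1) * R = R * (1 ⊗ₜ 1 ⊗ₜ a) := by
    simpa [hleft, hright] using hcen a
  have hcyc : tensorCycle k A R = R := by
    simpa [R] using sum_tmul_tmul_cycle_eq hcen hnorm2
  refine ⟨fun a => ?_, fun a => ?_⟩
  · simpa [hleft, hright] using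
      map_mul_eq_mul_map_of_map_eq _ hcyc (map_mul_eq_mul_map_of_map_eq _ hcyc (hC a))
  · simpa [hleft, hright] using map_mul_eq_mul_map_of_map_eq _ hcyc (hC a)
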